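/- For every delegation instance and every integer k with 1 ≤ k ≤ min(n, ℓ), the optimal utility of an IC menu of size k satisfies OPT_k ≥ (k / min(n, ℓ)) · OPT. -/

import Mathlib

open Finset

/-- A (discrete) delegation problem instance `(Θ, ξ, Ω, A, F, R, c)`. -/
structure DelegationInstance (Θ Ω A : Type*) [Fintype Θ] [Fintype Ω] [Fintype A] where
  /-- distribution over user types -/
  ξ : Θ → ℝ
  /-- outcome distribution of each action -/
  F : A → Ω → ℝ
  /-- reward vector of each type -/
  R : Θ → Ω → ℝ
  /-- cost of each action -/
  c : A → ℝ
  ξ_nonneg : ∀ θ, 0 ≤ ξ θ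
  ξ_sum : ∑ θ, ξ θ = 1
  F_nonneg : ∀ a ω, 0 ≤ F a ω
  F_sum : ∀ a, ∑ ω, F a ω = 1
  R_nonneg : ∀ θ ω, 0 ≤ R θ ω
  R_le_one : ∀ θ ω, R θ ω ≤ 1
  c_nonneg : ∀ a, 0 ≤ c a
  c_le_one : ∀ a, c a ≤ 1

namespace DelegationInstance

variable {Θ Ω A : Type*} [Fintype Θ] [Fintype Ω] [Fintype A]

/-- Expected payment `F_a^⊤ p` of the payment vector `p` under action `a`. -/
def ep (I : DelegationInstance Θ Ω A) (a : A) (p : Ω → ℝ) : ℝ :=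
  ∑ ω, I.F a ω * p ω

/-- The polytope `Π_a` of IC (nonnegative) payment vectors for action `a`. -/
def Pi (I : DelegationInstance Θ Ω A) (a : A) : Set (Ω → ℝ) :=
  {p | (∀ ω, 0 ≤ p ω) ∧ ∀ a', I.ep a p - I.c a ≥ I.ep a' p - I.c a'}

/-- The set `Q_a` of feasible expected payments for action `a`. -/
def Q (I : DelegationInstance Θ Ω A) (a : A) : Set ℝ :=
  {q | ∃ p ∈ I.Pi a, I.ep a p = q}

end DelegationInstance

/-- `sel` is a valid user selection function for user utilities `u` and
provider utilities `v`: a type selects the opt-out `none` iff every option has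
negative user utility; otherwise it selects an option maximizing the user's
utility, breaking ties in favor of the provider's utility. -/
def IsSel {Θ ι : Type*} (u : Θ → ι → ℝ) (v : ι → ℝ) (sel : Θ → Option ι) : Prop :=
  ∀ θ, (sel θ = none → ∀ i, u θ i < 0) ∧
    ∀ i, sel θ = some i →
      0 ≤ u θ i ∧ (∀ j, u θ j ≤ u θ i) ∧ ∀ j, u θ j = u θ i → v j ≤ v i

/-- Expected provider value of a selection function (opt-out contributes `0`). -/
def selValue {Θ ι : Type*} [Fintype Θ] (ξ : Θ → ℝ) (v : ι → ℝ) (sel : Θ → Option ι) : ℝ :=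
  ∑ θ, ξ θ * ((sel θ).elim 0 v)

namespace DelegationInstance

variable {Θ Ω A : Type*} [Fintype Θ] [Fintype Ω] [Fintype A]

/-- User utility `F_{a_i}^⊤ (R_θ - p_i)` of type `θ` for option `i` of a menu. -/
def menuU (I : DelegationInstance Θ Ω A) {ι : Type*} (a : ι → A) (p : ι → Ω → ℝ) :
    Θ → ι → ℝ :=
  fun θ i => I.ep (a i) fun ω => I.R θ ω - p i ω

/-- Provider utility `F_{a_i}^⊤ p_i - c_{a_i}` of option `i` of a menu. -/
def menuV (I : DelegationInstance Θ Ω A) {ι : Type*} (a : ι → A) (p : ι → Ω → ℝ) :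
    ι → ℝ :=
  fun i => I.ep (a i) (p i) - I.c (a i)

/-- Buyer utility `F_{a_i}^⊤ R_θ - q_i` of type `θ` for item `i` in the pricing problem. -/
def priceU (I : DelegationInstance Θ Ω A) {ι : Type*} (a : ι → A) (q : ι → ℝ) :
    Θ → ι → ℝ :=
  fun θ i => I.ep (a i) (I.R θ) - q i

/-- Seller utility `q_i - c_{a_i}` of item `i` in the pricing problem. -/
def priceV (I : DelegationInstance Θ Ω A) {ι : Type*} (a : ι → A) (q : ι → ℝ) :
    ι → ℝ :=
  fun i => q i - I.c (a i)

end DelegationInstance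

namespace DelegationInstance

variable {Θ Ω A : Type*} [Fintype Θ] [Fintype Ω] [Fintype A]

/-- `OPT_k`: the optimal expected provider utility over IC menus of size `k`
(together with a valid user selection). -/
noncomputable def OPTk (I : DelegationInstance Θ Ω A) (k : ℕ) : ℝ :=
  sSup {U | ∃ (a : Fin k → A) (p : Fin k → Ω → ℝ) (sel : Θ → Option (Fin k)),
    (∀ i, p i ∈ I.Pi (a i)) ∧ IsSel (I.menuU a p) (I.menuV a p) sel ∧
    U = selValue I.ξ (I.menuV a p) sel}

/-- User utility of type `θ` for a direct-menu option (`none` is the opt-out pair). -/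
def optU (I : DelegationInstance Θ Ω A) (θ : Θ) (o : Option (A × (Ω → ℝ))) : ℝ :=
  o.elim 0 fun ap => I.ep ap.1 fun ω => I.R θ ω - ap.2 ω

/-- Provider utility of a direct-menu option (`none` is the opt-out pair). -/
def optV (I : DelegationInstance Θ Ω A) (o : Option (A × (Ω → ℝ))) : ℝ :=
  o.elim 0 fun ap => I.ep ap.1 ap.2 - I.c ap.1

/-- A feasible direct menu: provider IC, user IC and user IR. -/
def DirectFeasible (I : DelegationInstance Θ Ω A) (m : Θ → Option (A × (Ω → ℝ))) : Prop :=
  (∀ θ, (m θ).elim True fun ap => ap.2 ∈ I.Pi ap.1) ∧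
  (∀ θ θ', I.optU θ (m θ') ≤ I.optU θ (m θ)) ∧
  (∀ θ, 0 ≤ I.optU θ (m θ))

/-- Expected provider utility of a direct menu. -/
def directValue (I : DelegationInstance Θ Ω A) (m : Θ → Option (A × (Ω → ℝ))) : ℝ :=
  ∑ θ, I.ξ θ * I.optV (m θ)

/-- `OPT`: the optimal expected provider utility over feasible direct menus. -/
noncomputable def DOPT (I : DelegationInstance Θ Ω A) : ℝ :=
  sSup {U | ∃ m, I.DirectFeasible m ∧ U = I.directValue m}

end DelegationInstance


/-! ### Auxiliary lemmas -/

/-- For nonnegative weights, any finset has a `j`-element subset carrying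
at least a `j / card` fraction of the total weight. -/
lemma exists_good_subset {α : Type*} [DecidableEq α] (w : α → ℝ) :
    ∀ (n : ℕ) (S : Finset α), S.card = n → (∀ a ∈ S, 0 ≤ w a) → ∀ j ≤ n,
    ∃ S' ⊆ S, S'.card = j ∧ (j : ℝ) * ∑ a ∈ S, w a ≤ (n : ℝ) * ∑ a ∈ S', w a := by
  intro n
  induction n with
  | zero =>
    intro S hS hw j hj
    interval_cases j
    exact ⟨∅, empty_subset _, card_empty, by simp [Finset.card_eq_zero.mp hS]⟩
  | succ n ih =>
    intro S hS hw j hj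
    rcases eq_or_lt_of_le hj with h | h
    · subst h
      exact ⟨S, Finset.Subset.refl _, hS, le_refl _⟩
    · have hj' : j ≤ n := Nat.lt_succ_iff.mp h
      have hne : S.Nonempty := by
        rw [← Finset.card_pos, hS]; omega
      obtain ⟨x, hxS, hxmin⟩ := Finset.exists_min_image S w hne
      have hcard' : (S.erase x).card = n := by
        rw [Finset.card_erase_of_mem hxS, hS]; omega
      have hw' : ∀ a ∈ S.erase x, 0 ≤ w a := fun a ha => hw a (Finset.mem_of_mem_erase ha)
      obtain ⟨S', hS'sub, hS'card, hS'sum⟩ := ih (S.erase x) hcard' hw' j hj'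
      refine ⟨S', hS'sub.trans (Finset.erase_subset _ _), hS'card, ?_⟩
      have hsplit : ∑ a ∈ S, w a = ∑ a ∈ S.erase x, w a + w x :=
        (Finset.sum_erase_add S w hxS).symm
      have he : ∑ a ∈ S.erase x, w a = ∑ a ∈ S, w a - w x := by linarith
      rw [he] at hS'sum
      have hmin : ((n : ℝ) + 1) * w x ≤ ∑ a ∈ S, w a := by
        have := Finset.card_nsmul_le_sum S w (w x) hxmin
        rw [hS] at this
        push_cast [nsmul_eq_mul] at this
        linarith
      have hS'nonneg : (0:ℝ) ≤ ∑ a ∈ S', w a :=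
        Finset.sum_nonneg fun a ha => hw a ((hS'sub.trans (Finset.erase_subset _ _)) ha)
      have hSnonneg : (0:ℝ) ≤ ∑ a ∈ S, w a := Finset.sum_nonneg hw
      rcases Nat.eq_zero_or_pos j with rfl | hj1
      · simp
        positivity
      · have hn0 : (0:ℝ) < (n:ℝ) := by
          have : 1 ≤ n := le_trans hj1 hj'
          exact_mod_cast lt_of_lt_of_le Nat.zero_lt_one this
        have hj0 : (0:ℝ) ≤ (j:ℝ) := by positivity
        have h1 := mul_le_mul_of_nonneg_left hS'sum (by linarith : (0:ℝ) ≤ (n:ℝ)+1)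
        have h2 := mul_le_mul_of_nonneg_left hmin hj0
        have key : (n:ℝ) * ((j:ℝ) * ∑ a ∈ S, w a) ≤ (n:ℝ) * (((n:ℝ)+1) * ∑ a ∈ S', w a) := by
          nlinarith [h1, h2]
        have := le_of_mul_le_mul_left key hn0
        push_cast
        linarith

/-- A valid selection function always exists when the option set is finite and nonempty. -/
lemma exists_isSel {Θ ι : Type*} [Fintype ι] [Nonempty ι] (u : Θ → ι → ℝ) (v : ι → ℝ) :
    ∃ sel : Θ → Option ι, IsSel u v sel := by
  classical
  have H : ∀ θ, ∃ i : ι, (∀ j, u θ j ≤ u θ i) ∧ ∀ j, u θ j = u θ i → v j ≤ v i := by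
    intro θ
    obtain ⟨i₁, -, hi₁⟩ := Finset.exists_max_image Finset.univ (u θ) Finset.univ_nonempty
    set M : Finset ι := Finset.univ.filter (fun i => ∀ j, u θ j ≤ u θ i) with hM
    have hMne : M.Nonempty := by
      refine ⟨i₁, ?_⟩
      simp only [hM, Finset.mem_filter, Finset.mem_univ, true_and]
      exact fun j => hi₁ j (Finset.mem_univ j)
    obtain ⟨i, hiM, hiv⟩ := Finset.exists_max_image M v hMne
    have hmax : ∀ j, u θ j ≤ u θ i := (Finset.mem_filter.mp hiM).2
    refine ⟨i, hmax, fun j hj => hiv j ?_⟩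
    simp only [hM, Finset.mem_filter, Finset.mem_univ, true_and]
    intro j'; rw [hj]; exact hmax j'
  choose f hf1 hf2 using H
  refine ⟨fun θ => if 0 ≤ u θ (f θ) then some (f θ) else none, fun θ => ⟨?_, ?_⟩⟩
  · intro hnone i
    by_cases h : 0 ≤ u θ (f θ)
    · simp [h] at hnone
    · exact lt_of_le_of_lt (hf1 θ i) (lt_of_not_ge h)
  · intro i hsome
    by_cases h : 0 ≤ u θ (f θ)
    · simp only [h, if_pos] at hsome
      injection hsome with hsome
      subst hsome
      exact ⟨h, hf1 θ, hf2 θ⟩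
    · simp [h] at hsome

namespace DelegationInstance

variable {Θ Ω A : Type*} [Fintype Θ] [Fintype Ω] [Fintype A]

lemma ep_sub (I : DelegationInstance Θ Ω A) (a : A) (f g : Ω → ℝ) :
    I.ep a (fun ω => f ω - g ω) = I.ep a f - I.ep a g := by
  simp [ep, mul_sub, Finset.sum_sub_distrib]

lemma ep_const (I : DelegationInstance Θ Ω A) (a : A) (t : ℝ) :
    I.ep a (fun _ => t) = t := by
  rw [ep, ← Finset.sum_mul, I.F_sum a, one_mul]

lemma ep_R_le_one (I : DelegationInstance Θ Ω A) (a : A) (θ : Θ) :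
    I.ep a (I.R θ) ≤ 1 := by
  rw [ep]
  calc ∑ ω, I.F a ω * I.R θ ω ≤ ∑ ω, I.F a ω := by
        apply Finset.sum_le_sum
        intro ω _
        exact mul_le_of_le_one_right (I.F_nonneg a ω) (I.R_le_one θ ω)
    _ = 1 := I.F_sum a

/-- The set defining `OPTk` is bounded above by `1`. -/
lemma OPTk_bddAbove (I : DelegationInstance Θ Ω A) (k : ℕ) :
    BddAbove {U | ∃ (a : Fin k → A) (p : Fin k → Ω → ℝ) (sel : Θ → Option (Fin k)),
      (∀ i, p i ∈ I.Pi (a i)) ∧ IsSel (I.menuU a p) (I.menuV a p) sel ∧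
      U = selValue I.ξ (I.menuV a p) sel} := by
  refine ⟨1, ?_⟩
  rintro U ⟨a, p, sel, hp, hsel, rfl⟩
  rw [selValue]
  calc ∑ θ, I.ξ θ * ((sel θ).elim 0 (I.menuV a p)) ≤ ∑ θ, I.ξ θ * 1 := by
        apply Finset.sum_le_sum
        intro θ _
        apply mul_le_mul_of_nonneg_left _ (I.ξ_nonneg θ)
        cases hselθ : sel θ with
        | none => norm_num
        | some i =>
          obtain ⟨hu, -, -⟩ := (hsel θ).2 i hselθ
          have h1 : I.menuU a p θ i = I.ep (a i) (I.R θ) - I.ep (a i) (p i) := I.ep_sub _ _ _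
          have h2 : I.ep (a i) (I.R θ) ≤ 1 := I.ep_R_le_one (a i) θ
          have h3 : 0 ≤ I.c (a i) := I.c_nonneg (a i)
          rw [h1] at hu
          show I.menuV a p i ≤ 1
          rw [menuV]
          linarith
    _ = 1 := by simp only [mul_one]; exact I.ξ_sum

/-- `OPTk` is nonnegative (for `k ≥ 1` and a nonempty action set). -/
lemma OPTk_nonneg (I : DelegationInstance Θ Ω A) (k : ℕ) (hk : 1 ≤ k)
    [Nonempty A] : 0 ≤ I.OPTk k := by
  classical
  obtain ⟨a₀, -, ha₀⟩ := Finset.exists_min_image Finset.univ I.c Finset.univ_nonempty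
  haveI : Nonempty (Fin k) := ⟨⟨0, hk⟩⟩
  set a : Fin k → A := fun _ => a₀ with ha
  set p : Fin k → Ω → ℝ := fun _ _ => I.c a₀ with hpp
  have hPi : ∀ i, p i ∈ I.Pi (a i) := by
    intro i
    constructor
    · intro ω; exact I.c_nonneg a₀
    · intro a'
      have h1 : I.ep a₀ (fun _ => I.c a₀) = I.c a₀ := I.ep_const a₀ _
      have h2 : I.ep a' (fun _ => I.c a₀) = I.c a₀ := I.ep_const a' _
      simp only [ha, hpp, h1, h2, ge_iff_le]
      have := ha₀ a' (Finset.mem_univ a')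
      linarith
  obtain ⟨sel, hsel⟩ := exists_isSel (I.menuU a p) (I.menuV a p)
  have hval : selValue I.ξ (I.menuV a p) sel = 0 := by
    rw [selValue]
    apply Finset.sum_eq_zero
    intro θ _
    have hV : ∀ i, I.menuV a p i = 0 := by
      intro i
      rw [menuV]
      simp only [ha, hpp]
      rw [I.ep_const a₀ _]
      ring
    cases hselθ : sel θ with
    | none => simp
    | some i => simp [hV i]
  rw [OPTk]
  rw [← hval]
  exact le_csSup (I.OPTk_bddAbove k) ⟨a, p, sel, hPi, hsel, rfl⟩

end DelegationInstance

namespace DelegationInstance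

variable {Θ Ω A : Type*} [Fintype Θ] [Fintype Ω] [Fintype A]

/-- Key lemma: any feasible direct menu is `min(n,ℓ)/k`-approximated by `OPT_k`. -/
lemma key_bound (I : DelegationInstance Θ Ω A) (k : ℕ) (hk1 : 1 ≤ k)
    (hk2 : k ≤ min (Fintype.card Θ) (Fintype.card A))
    (m : Θ → Option (A × (Ω → ℝ))) (hm : I.DirectFeasible m) :
    (k : ℝ) * I.directValue m ≤ ((min (Fintype.card Θ) (Fintype.card A) : ℕ) : ℝ) * I.OPTk k := by
  classical
  obtain ⟨hIC, hUIC, hIR⟩ := hm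
  set N := min (Fintype.card Θ) (Fintype.card A) with hN
  have hkA : k ≤ Fintype.card A := le_trans hk2 (min_le_right _ _)
  have hkΘ : k ≤ Fintype.card Θ := le_trans hk2 (min_le_left _ _)
  haveI : Nonempty A := Fintype.card_pos_iff.mp (by omega)
  haveI : Nonempty Θ := Fintype.card_pos_iff.mp (by omega)
  haveI : Nonempty (Fin k) := ⟨⟨0, hk1⟩⟩
  have hkN : k ≤ N := hk2
  have hOPT0 : 0 ≤ I.OPTk k := I.OPTk_nonneg k hk1
  have hk0R : (0:ℝ) ≤ (k:ℝ) := by positivity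
  have hN0R : (0:ℝ) ≤ (N:ℝ) := by positivity
  -- classes of types by assigned action
  set cls : A → Finset Θ :=
    fun a => Finset.univ.filter (fun θ => ∃ p, m θ = some (a, p)) with hcls
  set w : A → ℝ := fun a => ∑ θ ∈ cls a, I.ξ θ * I.optV (m θ) with hw
  set S : Finset A := Finset.univ.filter (fun a => 0 < w a) with hS
  -- all types in the same class have the same expected payment
  have hq : ∀ (a : A) (θ θ' : Θ) (p p' : Ω → ℝ), m θ = some (a, p) → m θ' = some (a, p') →
      I.ep a p = I.ep a p' := by
    intro a θ θ' p p' h h'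
    have h1 := hUIC θ θ'
    have h2 := hUIC θ' θ
    rw [h, h'] at h1 h2
    simp only [optU, Option.elim_some, I.ep_sub] at h1 h2
    linarith
  -- representatives of the positive classes
  have hrepex : ∀ a ∈ S, ∃ θ, θ ∈ cls a ∧ 0 < I.ξ θ * I.optV (m θ) := by
    intro a ha
    have h0 : 0 < w a := (Finset.mem_filter.mp ha).2
    have h1 : ∑ θ ∈ cls a, (0:ℝ) < ∑ θ ∈ cls a, I.ξ θ * I.optV (m θ) := by
      simpa [hw] using h0
    obtain ⟨θ, hθ1, hθ2⟩ := Finset.exists_lt_of_sum_lt h1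
    exact ⟨θ, hθ1, hθ2⟩
  choose! rep hrep1 hrep2 using hrepex
  have hrepP : ∀ a ∈ S, ∃ p, m (rep a) = some (a, p) := by
    intro a ha
    have := hrep1 a ha
    rw [hcls] at this
    exact (Finset.mem_filter.mp this).2
  choose! pay hpay using hrepP
  have hVrep : ∀ a ∈ S, 0 < I.optV (m (rep a)) := by
    intro a ha
    have h2 := hrep2 a ha
    by_contra h
    push_neg at h
    have := mul_nonpos_of_nonneg_of_nonpos (I.ξ_nonneg (rep a)) h
    linarith
  -- Step A : directValue ≤ ∑_{a ∈ S} w a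
  have hA : I.directValue m ≤ ∑ a ∈ S, w a := by
    have hfib : ∑ o : Option A, ∑ θ ∈ Finset.univ.filter (fun θ => (m θ).map Prod.fst = o),
        I.ξ θ * I.optV (m θ) = ∑ θ, I.ξ θ * I.optV (m θ) :=
      Finset.sum_fiberwise _ _ _
    have hnone : ∑ θ ∈ Finset.univ.filter (fun θ => (m θ).map Prod.fst = none),
        I.ξ θ * I.optV (m θ) = 0 := by
      apply Finset.sum_eq_zero
      intro θ hθ
      have h1 := (Finset.mem_filter.mp hθ).2
      have : m θ = none := by
        cases h : m θ with
        | none => rfl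
        | some ap => rw [h] at h1; simp at h1
      simp [this, optV]
    have hsome : ∀ a : A, Finset.univ.filter (fun θ => (m θ).map Prod.fst = some a) = cls a := by
      intro a
      ext θ
      simp only [hcls, Finset.mem_filter, Finset.mem_univ, true_and]
      constructor
      · intro h
        obtain ⟨ap, hap, hfst⟩ := Option.map_eq_some_iff.mp h
        exact ⟨ap.2, by rw [hap, ← hfst]⟩
      · rintro ⟨p, hp⟩
        rw [hp]
        simp
    have hdv : I.directValue m = ∑ a : A, w a := by
      rw [directValue, ← hfib, Fintype.sum_option, hnone, zero_add]
      exact Finset.sum_congr rfl (fun a _ => by rw [hsome a])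
    have hsplit := Finset.sum_filter_add_sum_filter_not Finset.univ (fun a => 0 < w a) w
    have hnonpos : ∑ a ∈ Finset.univ.filter (fun a => ¬ 0 < w a), w a ≤ 0 :=
      Finset.sum_nonpos (fun a ha => le_of_not_gt (Finset.mem_filter.mp ha).2)
    rw [hdv, ← hsplit, ← hS]
    linarith
  have hSw_nonneg : 0 ≤ ∑ a ∈ S, w a :=
    Finset.sum_nonneg fun a ha => le_of_lt (Finset.mem_filter.mp ha).2
  -- Step B : |S| ≤ N
  have hcardA : S.card ≤ Fintype.card A := by
    simpa using Finset.card_filter_le Finset.univ (fun a => 0 < w a)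
  have hcardΘ : S.card ≤ Fintype.card Θ := by
    have hmap : ∀ a ∈ S, rep a ∈ (Finset.univ : Finset Θ) := fun _ _ => Finset.mem_univ _
    refine le_trans (Finset.card_le_card_of_injOn rep hmap ?_) (by simp)
    intro a ha b hb hab
    have h1 := hpay a (Finset.mem_coe.mp ha)
    have h2 := hpay b (Finset.mem_coe.mp hb)
    rw [hab, h2] at h1
    simp only [Option.some.injEq, Prod.mk.injEq] at h1
    exact h1.1.symm
  have hcardS : S.card ≤ N := le_min hcardΘ hcardA
  -- Step D : a good subset S' of size min k |S|
  obtain ⟨S', hS'sub, hS'card, hS'sum⟩ := exists_good_subset w S.card S rfl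
    (fun a ha => le_of_lt (Finset.mem_filter.mp ha).2) (min k S.card) (min_le_right _ _)
  have hS'w_nonneg : 0 ≤ ∑ a ∈ S', w a :=
    Finset.sum_nonneg fun a ha => le_of_lt (Finset.mem_filter.mp (hS'sub ha)).2
  have hD : (k:ℝ) * ∑ a ∈ S, w a ≤ (N:ℝ) * ∑ a ∈ S', w a := by
    rcases le_total k S.card with h | h
    · rw [min_eq_left h] at hS'sum
      calc (k:ℝ) * ∑ a ∈ S, w a ≤ (S.card : ℝ) * ∑ a ∈ S', w a := hS'sum
        _ ≤ (N:ℝ) * ∑ a ∈ S', w a := by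
            apply mul_le_mul_of_nonneg_right _ hS'w_nonneg
            exact_mod_cast hcardS
    · rw [min_eq_right h] at hS'card
      have hSS' : S' = S := Finset.eq_of_subset_of_card_le hS'sub (by rw [hS'card])
      rw [hSS']
      apply mul_le_mul_of_nonneg_right _ hSw_nonneg
      exact_mod_cast hkN
  by_cases hne : S.Nonempty
  · -- the main case
    have hcpos : 0 < S'.card := by
      rw [hS'card]
      have : 0 < S.card := Finset.card_pos.mpr hne
      omega
    have hS'k : S'.card ≤ k := by rw [hS'card]; exact min_le_left _ _
    -- fill k slots with the elements of S'
    set e : Fin k → {x // x ∈ S'} :=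
      fun i => S'.equivFin.symm ⟨min i (S'.card - 1), by omega⟩ with he
    have hesurj : ∀ b : {x // x ∈ S'}, ∃ i : Fin k, e i = b := by
      intro b
      have hb := (S'.equivFin b).isLt
      refine ⟨⟨S'.equivFin b, lt_of_lt_of_le hb hS'k⟩, ?_⟩
      rw [he]
      have h1 : (⟨min ((S'.equivFin b : ℕ)) (S'.card - 1), by omega⟩ : Fin S'.card)
          = S'.equivFin b := by
        apply Fin.ext
        simp only []
        omega
      simp only []
      rw [h1, Equiv.symm_apply_apply]
    set act : Fin k → A := fun i => ((e i : {x // x ∈ S'}) : A) with hact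
    have hactS' : ∀ i, act i ∈ S' := fun i => (e i).2
    have hactS : ∀ i, act i ∈ S := fun i => hS'sub (hactS' i)
    set p : Fin k → Ω → ℝ := fun i => pay (act i) with hp
    have hmrep : ∀ i, m (rep (act i)) = some (act i, p i) := fun i => hpay (act i) (hactS i)
    have hPi : ∀ i, p i ∈ I.Pi (act i) := by
      intro i
      have h := hIC (rep (act i))
      rw [hmrep i] at h
      exact h
    have hVpos : ∀ i, 0 < I.menuV act p i := by
      intro i
      have h := hVrep (act i) (hactS i)
      rw [hmrep i] at h
      simpa [optV, menuV] using h
    have hUle : ∀ θ i, I.menuU act p θ i ≤ I.optU θ (m θ) := by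
      intro θ i
      have h := hUIC θ (rep (act i))
      rw [hmrep i] at h
      simpa [optU, menuU] using h
    obtain ⟨sel, hsel⟩ := exists_isSel (I.menuU act p) (I.menuV act p)
    have hle : selValue I.ξ (I.menuV act p) sel ≤ I.OPTk k :=
      le_csSup (I.OPTk_bddAbove k) ⟨act, p, sel, hPi, hsel, rfl⟩
    -- Step F : the constructed menu recovers the weight of S'
    have hF : ∑ a ∈ S', w a ≤ selValue I.ξ (I.menuV act p) sel := by
      have hpt0 : ∀ θ, 0 ≤ I.ξ θ * ((sel θ).elim 0 (I.menuV act p)) := by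
        intro θ
        cases h : sel θ with
        | none => simp
        | some i => exact mul_nonneg (I.ξ_nonneg θ) (le_of_lt (hVpos i))
      have hpt : ∀ a ∈ S', ∀ θ ∈ cls a,
          I.ξ θ * I.optV (m θ) ≤ I.ξ θ * ((sel θ).elim 0 (I.menuV act p)) := by
        intro a haS' θ hθ
        obtain ⟨pθ, hpθ⟩ : ∃ pθ, m θ = some (a, pθ) := by
          have := Finset.mem_filter.mp (by rw [hcls] at hθ; exact hθ)
          exact this.2
        obtain ⟨i₀, hi₀⟩ := hesurj ⟨a, haS'⟩
        have hacti₀ : act i₀ = a := by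
          show ((e i₀ : {x // x ∈ S'}) : A) = a
          rw [hi₀]
        have hq' : I.ep a (p i₀) = I.ep a pθ := by
          apply hq a (rep a) θ _ _ _ hpθ
          have := hmrep i₀
          rw [hacti₀] at this
          exact this
        have hu0 : I.menuU act p θ i₀ = I.optU θ (m θ) := by
          simp only [menuU, hacti₀, I.ep_sub, optU, hpθ, Option.elim_some, hq']
        have hIRθ : 0 ≤ I.menuU act p θ i₀ := by rw [hu0]; exact hIR θ
        cases hselθ : sel θ with
        | none => exact absurd hIRθ (not_le.mpr ((hsel θ).1 hselθ i₀))
        | some i =>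
          obtain ⟨hu_nn, hmax, htie⟩ := (hsel θ).2 i hselθ
          have heq : I.menuU act p θ i₀ = I.menuU act p θ i :=
            le_antisymm (hmax i₀) (by rw [hu0]; exact hUle θ i)
          have hv : I.menuV act p i₀ ≤ I.menuV act p i := htie i₀ heq
          have hoptV : I.optV (m θ) = I.menuV act p i₀ := by
            simp only [optV, hpθ, Option.elim_some, menuV, hacti₀, hq']
          simp only [Option.elim_some]
          apply mul_le_mul_of_nonneg_left _ (I.ξ_nonneg θ)
          rw [hoptV]
          exact hv
      have hdisj : (↑S' : Set A).PairwiseDisjoint cls := by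
        intro a ha b hb hab
        simp only [Function.onFun, Finset.disjoint_left]
        intro θ hθa hθb
        apply hab
        have h1 := (Finset.mem_filter.mp (by rw [hcls] at hθa; exact hθa)).2
        have h2 := (Finset.mem_filter.mp (by rw [hcls] at hθb; exact hθb)).2
        obtain ⟨pa, hpa⟩ := h1
        obtain ⟨pb, hpb⟩ := h2
        rw [hpa] at hpb
        simp only [Option.some.injEq, Prod.mk.injEq] at hpb
        exact hpb.1
      have hbi : ∑ a ∈ S', w a = ∑ θ ∈ S'.biUnion cls, I.ξ θ * I.optV (m θ) :=
        (Finset.sum_biUnion hdisj).symm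
      rw [hbi, selValue]
      calc ∑ θ ∈ S'.biUnion cls, I.ξ θ * I.optV (m θ)
          ≤ ∑ θ ∈ S'.biUnion cls, I.ξ θ * ((sel θ).elim 0 (I.menuV act p)) := by
            apply Finset.sum_le_sum
            intro θ hθ
            obtain ⟨a, haS', hθa⟩ := Finset.mem_biUnion.mp hθ
            exact hpt a haS' θ hθa
        _ ≤ ∑ θ, I.ξ θ * ((sel θ).elim 0 (I.menuV act p)) :=
            Finset.sum_le_sum_of_subset_of_nonneg (Finset.subset_univ _)
              (fun θ _ _ => hpt0 θ)
    calc (k:ℝ) * I.directValue m ≤ (k:ℝ) * ∑ a ∈ S, w a :=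
          mul_le_mul_of_nonneg_left hA hk0R
      _ ≤ (N:ℝ) * ∑ a ∈ S', w a := hD
      _ ≤ (N:ℝ) * selValue I.ξ (I.menuV act p) sel := mul_le_mul_of_nonneg_left hF hN0R
      _ ≤ (N:ℝ) * I.OPTk k := mul_le_mul_of_nonneg_left hle hN0R
  · -- S is empty : the direct value is nonpositive
    rw [Finset.not_nonempty_iff_eq_empty] at hne
    rw [hne] at hA
    simp only [Finset.sum_empty] at hA
    have h1 : (k:ℝ) * I.directValue m ≤ 0 := mul_nonpos_of_nonneg_of_nonpos hk0R hA
    have h2 : 0 ≤ (N:ℝ) * I.OPTk k := mul_nonneg hN0R hOPT0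
    linarith

end DelegationInstance
/-- For every delegation instance and every `1 ≤ k ≤ min(n, ℓ)`,
`OPT_k ≥ (k / min(n, ℓ)) ⬝ OPT`. -/
theorem stmt4 {Θ Ω A : Type*} [Fintype Θ] [Fintype Ω] [Fintype A]
    (I : DelegationInstance Θ Ω A) (k : ℕ) (hk1 : 1 ≤ k)
    (hk2 : k ≤ min (Fintype.card Θ) (Fintype.card A)) :
    ((k : ℝ) / (min (Fintype.card Θ) (Fintype.card A) : ℕ)) * I.DOPT ≤ I.OPTk k := by
  have hN1 : 1 ≤ min (Fintype.card Θ) (Fintype.card A) := le_trans hk1 hk2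
  have hk0 : (0:ℝ) < (k:ℝ) := by exact_mod_cast hk1
  have hN0 : (0:ℝ) < ((min (Fintype.card Θ) (Fintype.card A) : ℕ) : ℝ) := by exact_mod_cast hN1
  set N := min (Fintype.card Θ) (Fintype.card A) with hN
  -- the set defining DOPT is nonempty (the all-opt-out menu is feasible)
  have hfeas : I.DirectFeasible (fun _ => none) := by
    refine ⟨fun θ => trivial, fun θ θ' => le_refl _, fun θ => le_refl _⟩
  have hne : {U | ∃ m, I.DirectFeasible m ∧ U = I.directValue m}.Nonempty :=
    ⟨I.directValue (fun _ => none), fun _ => none, hfeas, rfl⟩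
  have hub : ∀ V ∈ {U | ∃ m, I.DirectFeasible m ∧ U = I.directValue m},
      V ≤ (N:ℝ) * I.OPTk k / k := by
    rintro V ⟨m, hm, rfl⟩
    have hkey := I.key_bound k hk1 hk2 m hm
    rw [le_div_iff₀ hk0]
    rw [← hN] at hkey
    linarith
  have hD : I.DOPT ≤ (N:ℝ) * I.OPTk k / k := csSup_le hne hub
  have h1 : (k:ℝ)/(N:ℝ) * I.DOPT ≤ (k:ℝ)/(N:ℝ) * ((N:ℝ) * I.OPTk k / k) :=
    mul_le_mul_of_nonneg_left hD (div_nonneg (le_of_lt hk0) (le_of_lt hN0))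
  have h2 : (k:ℝ)/(N:ℝ) * ((N:ℝ) * I.OPTk k / k) = I.OPTk k := by
    field_simp
  rw [h2] at h1
  exact h1
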